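/- For m = 2 resources: if two assignments a, a' on the same instance both satisfy weak ordered envy-freeness (WOE) and credibility (Cr), then they induce the same multiset of resource loads, i.e. {v_1, v_2} = {v'_1, v'_2} as multisets. -/
import Mathlib


/-- Load of resource `x` under assignment `a`. -/
def load {n : ℕ} (w : Fin n → ℤ) (a : Fin n → Fin 2) (x : Fin 2) : ℤ :=
  ∑ i ∈ Finset.univ.filter (fun i => a i = x), w i

lemma fin2_iff_aux (x r s : Fin 2) (h : s ≠ r) : (¬ x = r ↔ x = s) := by
  revert x r s; decide

lemma loadsum_aux {n : ℕ} (w : Fin n → ℤ) (b : Fin n → Fin 2) (r s : Fin 2) (hrs : s ≠ r) :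
    load w b r + load w b s = ∑ i, w i := by
  unfold load
  rw [← Finset.sum_filter_add_sum_filter_not Finset.univ (fun i => b i = r) w]
  congr 1
  apply Finset.sum_congr _ (fun _ _ => rfl)
  apply Finset.filter_congr
  intro i _
  simpa using (fin2_iff_aux (b i) r s hrs).symm

lemma key_aux {n : ℕ} (w : Fin n → ℤ) (hw : ∀ i, 0 < w i)
    (a a' : Fin n → Fin 2)
    (hWOE : ∀ i j, w i < w j → a i ≠ a j → load w a (a i) - w i ≤ load w a (a j) - w j)
    (hCr : ∀ i x, load w a (a i) ≤ load w a x + w i)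
    (hWOE' : ∀ i j, w i < w j → a' i ≠ a' j → load w a' (a' i) - w i ≤ load w a' (a' j) - w j)
    (r s r' s' : Fin 2) (hrs : s ≠ r) (hrs' : s' ≠ r')
    (h1 : load w a s ≤ load w a r) (h2 : load w a' s' ≤ load w a' r') :
    load w a r ≤ load w a' r' := by
  by_contra hcon
  push_neg at hcon
  have hsum : load w a r + load w a s = load w a' r' + load w a' s' := by
    rw [loadsum_aux w a r s hrs, loadsum_aux w a' r' s' hrs']
  set X := Finset.univ.filter (fun j => a j = r ∧ a' j = s') with hX
  set Y := Finset.univ.filter (fun j => a j = s ∧ a' j = r') with hY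
  have hsplit : (∑ j ∈ X, w j) - (∑ j ∈ Y, w j) = load w a r - load w a' r' := by
    unfold load
    rw [hX, hY, Finset.sum_filter, Finset.sum_filter, Finset.sum_filter, Finset.sum_filter,
      ← Finset.sum_sub_distrib, ← Finset.sum_sub_distrib]
    apply Finset.sum_congr rfl
    intro j _
    have e1 := fin2_iff_aux (a j) r s hrs
    have e2 := fin2_iff_aux (a' j) r' s' hrs'
    by_cases c1 : a j = r <;> by_cases c2 : a' j = r' <;> simp_all
  have hYnonneg : 0 ≤ ∑ j ∈ Y, w j := Finset.sum_nonneg fun j _ => (hw j).le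
  have hXpos : 0 < ∑ j ∈ X, w j := by omega
  have hXne : X.Nonempty := by
    by_contra hne
    rw [Finset.not_nonempty_iff_eq_empty] at hne
    rw [hne, Finset.sum_empty] at hXpos
    omega
  obtain ⟨i, hi⟩ := hXne
  have hiX : a i = r ∧ a' i = s' := (Finset.mem_filter.mp hi).2
  have hwi : load w a r - load w a s ≤ w i := by
    have := hCr i s
    rw [hiX.1] at this
    omega
  have hcross : ∀ j ∈ X, ∀ k ∈ Y, w j = w k := by
    intro j hj k hk
    have hjX := (Finset.mem_filter.mp hj).2
    have hkY := (Finset.mem_filter.mp hk).2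
    have hak : a j ≠ a k := by rw [hjX.1, hkY.1]; exact fun h => hrs h.symm
    have hak' : a' k ≠ a' j := by rw [hjX.2, hkY.2]; exact fun h => hrs' h.symm
    have hle1 : w k ≤ w j := by
      by_contra hlt
      push_neg at hlt
      have := hWOE j k hlt hak
      rw [hjX.1, hkY.1] at this
      omega
    have hle2 : w j ≤ w k := by
      by_contra hlt
      push_neg at hlt
      have := hWOE' k j hlt hak'
      rw [hjX.2, hkY.2] at this
      omega
    omega
  have hkeyineq : w i ≤ (∑ j ∈ X, w j) - (∑ j ∈ Y, w j) := by
    rcases Finset.eq_empty_or_nonempty Y with hYe | ⟨k, hk⟩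
    · rw [hYe, Finset.sum_empty]
      have : w i ≤ ∑ j ∈ X, w j :=
        Finset.single_le_sum (fun j _ => (hw j).le) hi
      omega
    · have hallX : ∀ j ∈ X, w j = w i := fun j hj => by
        rw [hcross j hj k hk, ← hcross i hi k hk]
      have hallY : ∀ j ∈ Y, w j = w i := fun j hj => by
        rw [← hcross i hi j hj]
      have hsX : ∑ j ∈ X, w j = X.card * w i := by
        rw [Finset.sum_congr rfl hallX, Finset.sum_const, nsmul_eq_mul]
      have hsY : ∑ j ∈ Y, w j = Y.card * w i := by
        rw [Finset.sum_congr rfl hallY, Finset.sum_const, nsmul_eq_mul]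
      have hwip := hw i
      have hcard : (Y.card : ℤ) < (X.card : ℤ) := by
        by_contra hc
        push_neg at hc
        have : (X.card : ℤ) * w i ≤ (Y.card : ℤ) * w i :=
          mul_le_mul_of_nonneg_right hc hwip.le
        omega
      have : (Y.card : ℤ) + 1 ≤ (X.card : ℤ) := by omega
      nlinarith [hsX, hsY]
  omega

theorem stmt_19 {n : ℕ} (w : Fin n → ℤ) (hw : ∀ i, 0 < w i)
    (a a' : Fin n → Fin 2)
    (hWOE : ∀ i j, w i < w j → a i ≠ a j → load w a (a i) - w i ≤ load w a (a j) - w j)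
    (hCr : ∀ i x, load w a (a i) ≤ load w a x + w i)
    (hWOE' : ∀ i j, w i < w j → a' i ≠ a' j → load w a' (a' i) - w i ≤ load w a' (a' j) - w j)
    (hCr' : ∀ i x, load w a' (a' i) ≤ load w a' x + w i) :
    ({load w a 0, load w a 1} : Multiset ℤ) = {load w a' 0, load w a' 1} := by
  have h01 : (1 : Fin 2) ≠ 0 := by decide
  have h10 : (0 : Fin 2) ≠ 1 := by decide
  have hsum : load w a 0 + load w a 1 = load w a' 0 + load w a' 1 := by
    rw [loadsum_aux w a 0 1 h01, loadsum_aux w a' 0 1 h01]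
  have keylem : ∀ (r s r' s' : Fin 2), s ≠ r → s' ≠ r' →
      load w a s ≤ load w a r → load w a' s' ≤ load w a' r' →
      load w a r ≤ load w a' r' :=
    fun r s r' s' hrs hrs' => key_aux w hw a a' hWOE hCr hWOE' r s r' s' hrs hrs'
  have keylem' : ∀ (r s r' s' : Fin 2), s ≠ r → s' ≠ r' →
      load w a' s ≤ load w a' r → load w a s' ≤ load w a r' →
      load w a' r ≤ load w a r' :=
    fun r s r' s' hrs hrs' => key_aux w hw a' a hWOE' hCr' hWOE r s r' s' hrs hrs'
  rcases le_total (load w a 1) (load w a 0) with ha | ha <;>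
    rcases le_total (load w a' 1) (load w a' 0) with hb | hb
  · have e1 := keylem 0 1 0 1 h01 h01 ha hb
    have e2 := keylem' 0 1 0 1 h01 h01 hb ha
    have : load w a 0 = load w a' 0 := le_antisymm e1 e2
    have : load w a 1 = load w a' 1 := by omega
    simp_all
  · have e1 := keylem 0 1 1 0 h01 h10 ha hb
    have e2 := keylem' 1 0 0 1 h10 h01 hb ha
    have c1 : load w a 0 = load w a' 1 := le_antisymm e1 e2
    have c2 : load w a 1 = load w a' 0 := by omega
    rw [c1, c2]
    exact Multiset.pair_comm _ _
  · have e1 := keylem 1 0 0 1 h10 h01 ha hb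
    have e2 := keylem' 0 1 1 0 h01 h10 hb ha
    have c1 : load w a 1 = load w a' 0 := le_antisymm e1 e2
    have c2 : load w a 0 = load w a' 1 := by omega
    rw [c1, c2]
    exact Multiset.pair_comm _ _
  · have e1 := keylem 1 0 1 0 h10 h10 ha hb
    have e2 := keylem' 1 0 1 0 h10 h10 hb ha
    have : load w a 1 = load w a' 1 := le_antisymm e1 e2
    have : load w a 0 = load w a' 0 := by omega
    simp_all
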